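/- arXiv:2501.13814 — 3 statements merged into one kernel-verified Lean document; each statement's English description precedes it below -/
import Mathlib

section
/- Let m₂ > 0, m₄ real with m₄ ≥ 3m₂², and ε ∈ (0, m₂²/m₄). For any x₀ ∈ ℝ with x₀² ≤ ε m₂/(1−ε), setting s₁ = −(1−ε)x₀/ε, s₂ = (m₂ − (1−ε)x₀²)/ε, s₃ = −(1−ε)x₀³/ε, s₄ = (m₄ − (1−ε)x₀⁴)/ε, the determinant of the 3×3 Hankel matrix with rows (1,s₁,s₂), (s₁,s₂,s₃), (s₂,s₃,s₄) is negative. -/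
/-- Case `m₄ ≥ 3m₂²` of the low-entropy moment problem: for `ε ∈ (0, m₂²/m₄)` and
any `x₀` with `x₀² ≤ ε m₂/(1-ε)`, the shifted Hankel determinant is negative. -/
theorem hankel_det_neg_case1 (m₂ m₄ ε x₀ : ℝ)
    (hm₂ : 0 < m₂) (hm₄ : 3 * m₂ ^ 2 ≤ m₄)
    (hε0 : 0 < ε) (hε : ε < m₂ ^ 2 / m₄)
    (hx₀ : x₀ ^ 2 ≤ ε * m₂ / (1 - ε)) :
    Matrix.det !![(1 : ℝ), -(1 - ε) * x₀ / ε, (m₂ - (1 - ε) * x₀ ^ 2) / ε;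
        -(1 - ε) * x₀ / ε, (m₂ - (1 - ε) * x₀ ^ 2) / ε, -(1 - ε) * x₀ ^ 3 / ε;
        (m₂ - (1 - ε) * x₀ ^ 2) / ε, -(1 - ε) * x₀ ^ 3 / ε,
          (m₄ - (1 - ε) * x₀ ^ 4) / ε] < 0 := by
  have hm4pos : 0 < m₄ := by nlinarith
  have hε1 : ε < 1 := by
    have : m₂ ^ 2 / m₄ ≤ 1 / 3 := by
      rw [div_le_div_iff₀ hm4pos (by norm_num)]; nlinarith
    linarith
  have hεm : ε * m₄ < m₂ ^ 2 := (lt_div_iff₀ hm4pos).mp hε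
  rw [Matrix.det_fin_three]
  simp only [Matrix.of_apply, Matrix.cons_val_zero, Matrix.cons_val_one, Matrix.cons_val_two,
    Matrix.head_cons, Matrix.tail_cons, Matrix.cons_val']
  have key : (1 : ℝ) * ((m₂ - (1 - ε) * x₀ ^ 2) / ε) * ((m₄ - (1 - ε) * x₀ ^ 4) / ε) -
      1 * (-(1 - ε) * x₀ ^ 3 / ε) * (-(1 - ε) * x₀ ^ 3 / ε) -
      -(1 - ε) * x₀ / ε * (-(1 - ε) * x₀ / ε) * ((m₄ - (1 - ε) * x₀ ^ 4) / ε) +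
      -(1 - ε) * x₀ / ε * (-(1 - ε) * x₀ ^ 3 / ε) * ((m₂ - (1 - ε) * x₀ ^ 2) / ε) +
      (m₂ - (1 - ε) * x₀ ^ 2) / ε * (-(1 - ε) * x₀ / ε) * (-(1 - ε) * x₀ ^ 3 / ε) -
      (m₂ - (1 - ε) * x₀ ^ 2) / ε * ((m₂ - (1 - ε) * x₀ ^ 2) / ε) * ((m₂ - (1 - ε) * x₀ ^ 2) / ε) =
      (-(1 - ε) * (m₂ * x₀ ^ 4 + (m₄ - 3 * m₂ ^ 2) * x₀ ^ 2) + (ε * m₂ * m₄ - m₂ ^ 3)) / ε ^ 3 := by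
    field_simp
    ring
  rw [key]
  apply div_neg_of_neg_of_pos _ (by positivity)
  have h1 : 0 ≤ (1 - ε) * (m₂ * x₀ ^ 4 + (m₄ - 3 * m₂ ^ 2) * x₀ ^ 2) := by
    apply mul_nonneg (by linarith)
    nlinarith [sq_nonneg x₀, sq_nonneg (x₀ ^ 2)]
  nlinarith
end

section
/- Suppose m₂ > 0, m₄ > m₂², and let ε ∈ (0, 1/2) with ε < η, where η = m₂²/m₄ if m₄ ≥ 3m₂² and η = (5m₂² − m₄)/(9m₂² − m₄) otherwise. Then there is no discrete random variable X̃ and no x₀ ∈ ℝ such that ε·E[X̃ⁿ] + (1−ε)x₀ⁿ equals mₙ for n = 1,2,3,4, where m₁ = m₃ = 0. -/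
open scoped ENNReal

/-- The quadratic form in the moments of a PMF is nonnegative. -/
lemma pmf_quad_nonneg (q : PMF ℝ)
    (hsum : ∀ n : ℕ, 1 ≤ n → n ≤ 4 → Summable (fun x : ℝ => (q x).toReal * x ^ n))
    (a b c : ℝ) :
    0 ≤ a ^ 2 + 2 * a * b * (∑' x : ℝ, (q x).toReal * x ^ 1)
      + (b ^ 2 + 2 * a * c) * (∑' x : ℝ, (q x).toReal * x ^ 2)
      + 2 * b * c * (∑' x : ℝ, (q x).toReal * x ^ 3)
      + c ^ 2 * (∑' x : ℝ, (q x).toReal * x ^ 4) := by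
  set f : ℝ → ℝ := fun x => (q x).toReal with hf
  have hf0 : ∀ x, 0 ≤ f x := fun x => ENNReal.toReal_nonneg
  have hfs : Summable f := ENNReal.summable_toReal q.tsum_coe_ne_top
  have hft : ∑' x, f x = 1 := by
    have := ENNReal.tsum_toReal_eq (fun x : ℝ => q.apply_ne_top x)
    rw [hf]
    rw [← this, q.tsum_coe, ENNReal.toReal_one]
  have h1 := hsum 1 (by norm_num) (by norm_num)
  have h2 := hsum 2 (by norm_num) (by norm_num)
  have h3 := hsum 3 (by norm_num) (by norm_num)
  have h4 := hsum 4 (by norm_num) (by norm_num)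
  -- pointwise identity
  have key : ∀ x : ℝ, f x * (a + b * x + c * x ^ 2) ^ 2
      = a ^ 2 * f x + 2 * a * b * (f x * x ^ 1) + (b ^ 2 + 2 * a * c) * (f x * x ^ 2)
        + 2 * b * c * (f x * x ^ 3) + c ^ 2 * (f x * x ^ 4) := fun x => by ring
  have s1 : Summable (fun x => a ^ 2 * f x) := hfs.mul_left _
  have s2 : Summable (fun x => 2 * a * b * (f x * x ^ 1)) := h1.mul_left _
  have s3 : Summable (fun x => (b ^ 2 + 2 * a * c) * (f x * x ^ 2)) := h2.mul_left _
  have s4 : Summable (fun x => 2 * b * c * (f x * x ^ 3)) := h3.mul_left _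
  have s5 : Summable (fun x => c ^ 2 * (f x * x ^ 4)) := h4.mul_left _
  have htsum : ∑' x, f x * (a + b * x + c * x ^ 2) ^ 2
      = a ^ 2 * (∑' x, f x) + 2 * a * b * (∑' x, f x * x ^ 1)
        + (b ^ 2 + 2 * a * c) * (∑' x, f x * x ^ 2)
        + 2 * b * c * (∑' x, f x * x ^ 3) + c ^ 2 * (∑' x, f x * x ^ 4) := by
    calc ∑' x, f x * (a + b * x + c * x ^ 2) ^ 2
        = ∑' x, (a ^ 2 * f x + 2 * a * b * (f x * x ^ 1)
            + (b ^ 2 + 2 * a * c) * (f x * x ^ 2)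
            + 2 * b * c * (f x * x ^ 3) + c ^ 2 * (f x * x ^ 4)) :=
          tsum_congr key
      _ = _ := by
          rw [Summable.tsum_add (((s1.add s2).add s3).add s4) s5,
            Summable.tsum_add ((s1.add s2).add s3) s4, Summable.tsum_add (s1.add s2) s3,
            Summable.tsum_add s1 s2, tsum_mul_left, tsum_mul_left, tsum_mul_left,
            tsum_mul_left, tsum_mul_left]
  have hnn : 0 ≤ ∑' x, f x * (a + b * x + c * x ^ 2) ^ 2 :=
    tsum_nonneg fun x => mul_nonneg (hf0 x) (sq_nonneg _)
  rw [htsum, hft] at hnn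
  linarith

/-- Low-entropy moment impossibility (symmetric case, `m₁ = m₃ = 0`): for
`ε < η(m₂, m₄)`, no discrete random variable `X̃` (given by a PMF with finite
fourth moment) and point `x₀` satisfy `ε·E[X̃ⁿ] + (1-ε)·x₀ⁿ = mₙ` for
`n = 1, 2, 3, 4`. -/
theorem no_four_moment_match (m₂ m₄ ε : ℝ)
    (hm₂ : 0 < m₂) (hm₄ : m₂ ^ 2 < m₄)
    (hε0 : 0 < ε) (hεhalf : ε < 1 / 2)
    (hεη : ε < if 3 * m₂ ^ 2 ≤ m₄ then m₂ ^ 2 / m₄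
      else (5 * m₂ ^ 2 - m₄) / (9 * m₂ ^ 2 - m₄)) :
    ¬ ∃ (q : PMF ℝ) (x₀ : ℝ),
      (∀ n : ℕ, 1 ≤ n → n ≤ 4 → Summable (fun x : ℝ => (q x).toReal * x ^ n)) ∧
      ε * (∑' x : ℝ, (q x).toReal * x ^ 1) + (1 - ε) * x₀ ^ 1 = 0 ∧
      ε * (∑' x : ℝ, (q x).toReal * x ^ 2) + (1 - ε) * x₀ ^ 2 = m₂ ∧
      ε * (∑' x : ℝ, (q x).toReal * x ^ 3) + (1 - ε) * x₀ ^ 3 = 0 ∧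
      ε * (∑' x : ℝ, (q x).toReal * x ^ 4) + (1 - ε) * x₀ ^ 4 = m₄ := by
  rintro ⟨q, x₀, hsum, h1, h2, h3, h4⟩
  have hQ := pmf_quad_nonneg q hsum (m₂ * (m₄ - m₂ * x₀ ^ 2))
    ((m₄ - m₂ ^ 2) * x₀) (m₂ * (x₀ ^ 2 - m₂))
  have h0 : (0:ℝ) ≤ ε * ((m₂ * (m₄ - m₂ * x₀ ^ 2)) ^ 2
      + 2 * (m₂ * (m₄ - m₂ * x₀ ^ 2)) * ((m₄ - m₂ ^ 2) * x₀)
          * (∑' x : ℝ, (q x).toReal * x ^ 1)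
      + (((m₄ - m₂ ^ 2) * x₀) ^ 2 + 2 * (m₂ * (m₄ - m₂ * x₀ ^ 2)) * (m₂ * (x₀ ^ 2 - m₂)))
          * (∑' x : ℝ, (q x).toReal * x ^ 2)
      + 2 * ((m₄ - m₂ ^ 2) * x₀) * (m₂ * (x₀ ^ 2 - m₂)) * (∑' x : ℝ, (q x).toReal * x ^ 3)
      + (m₂ * (x₀ ^ 2 - m₂)) ^ 2 * (∑' x : ℝ, (q x).toReal * x ^ 4)) :=
    mul_nonneg hε0.le hQ
  have hEq : ε * ((m₂ * (m₄ - m₂ * x₀ ^ 2)) ^ 2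
      + 2 * (m₂ * (m₄ - m₂ * x₀ ^ 2)) * ((m₄ - m₂ ^ 2) * x₀)
          * (∑' x : ℝ, (q x).toReal * x ^ 1)
      + (((m₄ - m₂ ^ 2) * x₀) ^ 2 + 2 * (m₂ * (m₄ - m₂ * x₀ ^ 2)) * (m₂ * (x₀ ^ 2 - m₂)))
          * (∑' x : ℝ, (q x).toReal * x ^ 2)
      + 2 * ((m₄ - m₂ ^ 2) * x₀) * (m₂ * (x₀ ^ 2 - m₂)) * (∑' x : ℝ, (q x).toReal * x ^ 3)
      + (m₂ * (x₀ ^ 2 - m₂)) ^ 2 * (∑' x : ℝ, (q x).toReal * x ^ 4))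
      = (m₂ * (x₀ ^ 2) ^ 2 + (m₄ - 3 * m₂ ^ 2) * (x₀ ^ 2) + m₂ * m₄)
        * ((m₄ - m₂ ^ 2) * m₂
          - (1 - ε) * (m₂ * (x₀ ^ 2) ^ 2 + (m₄ - 3 * m₂ ^ 2) * (x₀ ^ 2) + m₂ * m₄)) := by
    linear_combination (2 * (m₂ * (m₄ - m₂ * x₀ ^ 2)) * ((m₄ - m₂ ^ 2) * x₀)) * h1
      + (((m₄ - m₂ ^ 2) * x₀) ^ 2
          + 2 * (m₂ * (m₄ - m₂ * x₀ ^ 2)) * (m₂ * (x₀ ^ 2 - m₂))) * h2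
      + (2 * ((m₄ - m₂ ^ 2) * x₀) * (m₂ * (x₀ ^ 2 - m₂))) * h3
      + (m₂ * (x₀ ^ 2 - m₂)) ^ 2 * h4
  rw [hEq] at h0
  have htnn : (0:ℝ) ≤ x₀ ^ 2 := sq_nonneg x₀
  generalize hu : x₀ ^ 2 = u at h0 htnn
  clear hEq hQ h1 h2 h3 h4 hsum hu
  obtain ⟨P, hP⟩ : ∃ P : ℝ, P = m₂ * u ^ 2 + (m₄ - 3 * m₂ ^ 2) * u + m₂ * m₄ := ⟨_, rfl⟩
  rw [← hP] at h0
  have hdpos : (0:ℝ) < m₄ - m₂ ^ 2 := by linarith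
  have hPpos : 0 < P := by
    rw [hP]
    nlinarith [mul_nonneg hm₂.le (sq_nonneg (u - m₂)),
      mul_pos hdpos (by nlinarith : (0:ℝ) < u + m₂)]
  have hkey : (m₄ - m₂ ^ 2) * m₂ < (1 - ε) * P := by
    rw [hP]
    by_cases hcase : 3 * m₂ ^ 2 ≤ m₄
    · rw [if_pos hcase] at hεη
      have hm₄pos : (0:ℝ) < m₄ := by nlinarith
      have hεm₄ : ε * m₄ < m₂ ^ 2 := (lt_div_iff₀ hm₄pos).mp hεη
      nlinarith [mul_nonneg (mul_nonneg (by linarith : (0:ℝ) ≤ 1 - ε) htnn)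
          (by linarith : (0:ℝ) ≤ m₄ - 3 * m₂ ^ 2),
        mul_nonneg (mul_nonneg (by linarith : (0:ℝ) ≤ 1 - ε) hm₂.le) (sq_nonneg u)]
    · rw [if_neg hcase] at hεη
      push_neg at hcase
      have h9 : (0:ℝ) < 9 * m₂ ^ 2 - m₄ := by nlinarith
      have hε9 : ε * (9 * m₂ ^ 2 - m₄) < 5 * m₂ ^ 2 - m₄ := (lt_div_iff₀ h9).mp hεη
      nlinarith [mul_nonneg (by linarith : (0:ℝ) ≤ 1 - ε)
          (sq_nonneg (2 * m₂ * u + m₄ - 3 * m₂ ^ 2)),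
        mul_pos hdpos
          (by linarith : (0:ℝ) < 5 * m₂ ^ 2 - m₄ - ε * (9 * m₂ ^ 2 - m₄))]
  nlinarith [h0, mul_pos hPpos (by linarith : (0:ℝ) < (1 - ε) * P - (m₄ - m₂ ^ 2) * m₂)]
end

section
/- Given real numbers m₁, m₂, m₃ with m₂ > m₁² and the necessary Hankel extension condition holding, and any h > 0, there exists a discrete random variable X supported on at most 3 points with entropy H(X) ≤ h and E[Xⁿ] = mₙ for n = 1, 2, 3, whenever m₁, m₂, m₃ are the first three moments of some non-degenerate random variable (i.e., m₂ − m₁² > 0). -/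
open scoped ENNReal

/-- Entropy (in nats) of a discrete real random variable given by its PMF. -/
noncomputable def pmfEntropy (p : PMF ℝ) : ℝ :=
  ∑' x, Real.negMulLog ((p x).toReal)

private lemma sum_triple {M : Type*} [AddCommMonoid M] {x y z : ℝ} (hxy : x ≠ y) (hxz : x ≠ z)
    (hyz : y ≠ z) (F : ℝ → M) :
    ∑ w ∈ ({x, y, z} : Finset ℝ), F w = F x + F y + F z := by
  rw [show ({x, y, z} : Finset ℝ) = insert x (insert y {z}) from rfl,
    Finset.sum_insert (by simp [hxy, hxz]), Finset.sum_insert (by simp [hyz]),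
    Finset.sum_singleton, add_assoc]

/-- Core construction for a fixed small `ε`. -/
private lemma exists_pmf_aux (m₁ m₂ m₃ ε : ℝ) (hmom : m₁ ^ 2 < m₂) (hε0 : 0 < ε)
    (hε1 : ε < 1) :
    ∃ p : PMF ℝ,
      (∃ s : Finset ℝ, s.card ≤ 3 ∧ p.support ⊆ s) ∧
      pmfEntropy p ≤ Real.negMulLog (1 - ε) + Real.negMulLog ε + ε * Real.log 2 ∧
      (∑' x : ℝ, (p x).toReal * x ^ 1) = m₁ ∧
      (∑' x : ℝ, (p x).toReal * x ^ 2) = m₂ ∧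
      (∑' x : ℝ, (p x).toReal * x ^ 3) = m₃ := by
  have hεne : ε ≠ 0 := hε0.ne'
  set μ₂ : ℝ := (m₂ - m₁ ^ 2) / ε with hμ₂def
  set μ₃ : ℝ := (m₃ - 3 * m₁ * m₂ + 2 * m₁ ^ 3) / ε with hμ₃def
  have hμ₂ : 0 < μ₂ := div_pos (by linarith) hε0
  have hεμ₂ : ε * μ₂ = m₂ - m₁ ^ 2 := by rw [hμ₂def]; field_simp
  have hεμ₃ : ε * μ₃ = m₃ - 3 * m₁ * m₂ + 2 * m₁ ^ 3 := by rw [hμ₃def]; field_simp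
  clear_value μ₂ μ₃
  clear hμ₂def hμ₃def
  obtain ⟨a, b, ha, hb, hab, habs⟩ :
      ∃ a b : ℝ, a < 0 ∧ 0 < b ∧ a * b = -μ₂ ∧ a + b = μ₃ / μ₂ := by
    set D : ℝ := Real.sqrt (μ₃ ^ 2 + 4 * μ₂ ^ 3) with hDdef
    have hD2 : D ^ 2 = μ₃ ^ 2 + 4 * μ₂ ^ 3 := Real.sq_sqrt (by positivity)
    have hDpos : 0 < D := Real.sqrt_pos.mpr (by positivity)
    clear_value D
    have hDgt : μ₃ < D := by nlinarith [pow_pos hμ₂ 3]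
    have hDgt' : -D < μ₃ := by nlinarith [pow_pos hμ₂ 3]
    refine ⟨(μ₃ - D) / (2 * μ₂), (μ₃ + D) / (2 * μ₂),
      div_neg_of_neg_of_pos (by linarith) (by linarith),
      div_pos (by linarith) (by linarith), ?_, ?_⟩
    · field_simp
      nlinarith [hD2]
    · field_simp
      ring
  have hba : 0 < b - a := by linarith
  set q : ℝ := b / (b - a) with hqdef
  have hq0 : 0 < q := div_pos hb hba
  have hq1 : q < 1 := (div_lt_one hba).mpr (by linarith)
  have hps1 : q * a + (1 - q) * b = 0 := by rw [hqdef]; field_simp; ring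
  have hps2 : q * a ^ 2 + (1 - q) * b ^ 2 = μ₂ := by
    have h1 : q * a ^ 2 + (1 - q) * b ^ 2 = -(a * b) := by rw [hqdef]; field_simp; ring
    rw [h1, hab]; ring
  have hps3 : q * a ^ 3 + (1 - q) * b ^ 3 = μ₃ := by
    have h1 : q * a ^ 3 + (1 - q) * b ^ 3 = -(a * b) * (a + b) := by rw [hqdef]; field_simp; ring
    rw [h1, hab, habs]; field_simp
  clear_value q
  -- the three atoms
  set x₁ : ℝ := m₁ + a with hx₁def
  set x₂ : ℝ := m₁ + b with hx₂def
  have hm1x1 : m₁ ≠ x₁ := by rw [hx₁def]; intro hc; nlinarith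
  have hm1x2 : m₁ ≠ x₂ := by rw [hx₂def]; intro hc; nlinarith
  have hx12 : x₁ ≠ x₂ := by rw [hx₁def, hx₂def]; intro hc; nlinarith
  -- the weights
  set w₀ : ℝ := 1 - ε with hw₀def
  set w₁ : ℝ := ε * q with hw₁def
  set w₂ : ℝ := ε * (1 - q) with hw₂def
  have hw₀0 : 0 ≤ w₀ := by rw [hw₀def]; linarith
  have hw₁0 : 0 ≤ w₁ := by rw [hw₁def]; positivity
  have hw₂0 : 0 ≤ w₂ := by rw [hw₂def]; nlinarith
  have hwsum : w₀ + w₁ + w₂ = 1 := by rw [hw₀def, hw₁def, hw₂def]; ring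
  set g : ℝ → ℝ := fun x => if x = m₁ then w₀ else if x = x₁ then w₁ else if x = x₂ then w₂ else 0
    with hgdef
  have hgnn : ∀ x, 0 ≤ g x := by
    intro x
    rw [hgdef]
    dsimp only
    split_ifs <;> simp [hw₀0, hw₁0, hw₂0]
  have hg0 : g m₁ = w₀ := by simp [hgdef]
  have hg1 : g x₁ = w₁ := by simp [hgdef, hm1x1.symm]
  have hg2 : g x₂ = w₂ := by simp [hgdef, hm1x2.symm, hx12.symm]
  have hfsum : ∑ x ∈ ({m₁, x₁, x₂} : Finset ℝ), ENNReal.ofReal (g x) = 1 := by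
    rw [sum_triple hm1x1 hm1x2 hx12, hg0, hg1, hg2,
      ← ENNReal.ofReal_add hw₀0 hw₁0, ← ENNReal.ofReal_add (by positivity) hw₂0, hwsum,
      ENNReal.ofReal_one]
  have hzero : ∀ x ∉ ({m₁, x₁, x₂} : Finset ℝ), ENNReal.ofReal (g x) = 0 := by
    intro x hx
    simp only [Finset.mem_insert, Finset.mem_singleton, not_or] at hx
    rw [hgdef]
    simp [hx.1, hx.2.1, hx.2.2]
  refine ⟨PMF.ofFinset (fun x => ENNReal.ofReal (g x)) _ hfsum hzero,
    ⟨{m₁, x₁, x₂}, ?_, ?_⟩, ?_, ?_, ?_, ?_⟩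
  · -- card
    refine (Finset.card_insert_le _ _).trans ?_
    have := Finset.card_insert_le x₁ ({x₂} : Finset ℝ)
    simp only [Finset.card_singleton] at this ⊢
    omega
  · -- support
    intro x hx
    by_contra hxs
    rw [PMF.mem_support_iff, PMF.ofFinset_apply] at hx
    exact hx (hzero x hxs)
  · -- entropy
    have hval : ∀ x, ((PMF.ofFinset (fun x => ENNReal.ofReal (g x)) ({m₁, x₁, x₂} : Finset ℝ) hfsum hzero) x).toReal
        = g x := fun x => by rw [PMF.ofFinset_apply, ENNReal.toReal_ofReal (hgnn x)]
    have hoff : ∀ x ∉ ({m₁, x₁, x₂} : Finset ℝ), Real.negMulLog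
        (((PMF.ofFinset (fun x => ENNReal.ofReal (g x)) ({m₁, x₁, x₂} : Finset ℝ) hfsum hzero) x).toReal) = 0 := by
      intro x hx
      rw [hval x]
      simp only [Finset.mem_insert, Finset.mem_singleton, not_or] at hx
      rw [hgdef]
      simp [hx.1, hx.2.1, hx.2.2]
    rw [pmfEntropy, tsum_eq_sum hoff, sum_triple hm1x1 hm1x2 hx12,
      hval, hval, hval, hg0, hg1, hg2]
    have h1 : Real.negMulLog w₁ + Real.negMulLog w₂
        = Real.negMulLog ε + ε * Real.binEntropy q := by
      rw [hw₁def, hw₂def, Real.negMulLog_mul, Real.negMulLog_mul,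
        Real.binEntropy_eq_negMulLog_add_negMulLog_one_sub]
      ring
    have h2 : ε * Real.binEntropy q ≤ ε * Real.log 2 :=
      mul_le_mul_of_nonneg_left Real.binEntropy_le_log_two hε0.le
    rw [hw₀def]
    linarith
  all_goals {
    have hval : ∀ x, ((PMF.ofFinset (fun x => ENNReal.ofReal (g x)) ({m₁, x₁, x₂} : Finset ℝ) hfsum hzero) x).toReal
        = g x := fun x => by rw [PMF.ofFinset_apply, ENNReal.toReal_ofReal (hgnn x)]
    have hoff : ∀ n : ℕ, ∀ x ∉ ({m₁, x₁, x₂} : Finset ℝ),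
        ((PMF.ofFinset (fun x => ENNReal.ofReal (g x)) ({m₁, x₁, x₂} : Finset ℝ) hfsum hzero) x).toReal * x ^ n = 0 := by
      intro n x hx
      rw [hval x]
      simp only [Finset.mem_insert, Finset.mem_singleton, not_or] at hx
      rw [hgdef]
      simp [hx.1, hx.2.1, hx.2.2]
    rw [tsum_eq_sum (hoff _), sum_triple hm1x1 hm1x2 hx12, hval, hval, hval,
      hg0, hg1, hg2, hw₀def, hw₁def, hw₂def, hx₁def, hx₂def]
    try linear_combination ε * hps1
    try linear_combination (2 * ε * m₁) * hps1 + ε * hps2 + hεμ₂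
    try linear_combination (3 * ε * m₁ ^ 2) * hps1 + (3 * ε * m₁) * hps2 + ε * hps3
      + 3 * m₁ * hεμ₂ + hεμ₃
  }

/-- Three moments of any non-degenerate random variable (i.e. with `m₂ - m₁² > 0`)
can be matched by a discrete random variable with at most 3 atoms and arbitrarily
small entropy. -/
theorem three_moments_matchable_low_entropy (m₁ m₂ m₃ : ℝ)
    (hmom : m₁ ^ 2 < m₂) (h : ℝ) (hh : 0 < h) :
    ∃ p : PMF ℝ,
      (∃ s : Finset ℝ, s.card ≤ 3 ∧ p.support ⊆ s) ∧
      pmfEntropy p ≤ h ∧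
      (∑' x : ℝ, (p x).toReal * x ^ 1) = m₁ ∧
      (∑' x : ℝ, (p x).toReal * x ^ 2) = m₂ ∧
      (∑' x : ℝ, (p x).toReal * x ^ 3) = m₃ := by
  have hc : Continuous fun ε : ℝ => Real.negMulLog (1 - ε) + Real.negMulLog ε
      + ε * Real.log 2 := by fun_prop
  have hne : ((nhdsWithin (0 : ℝ) (Set.Ioo 0 1)) : Filter ℝ).NeBot := by
    refine mem_closure_iff_nhdsWithin_neBot.mp ?_
    rw [closure_Ioo one_ne_zero.symm]
    simp
  have htend : Filter.Tendsto (fun ε : ℝ => Real.negMulLog (1 - ε) + Real.negMulLog ε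
      + ε * Real.log 2) (nhdsWithin 0 (Set.Ioo 0 1)) (nhds 0) := by
    have := (hc.tendsto 0).mono_left (nhdsWithin_le_nhds (s := Set.Ioo (0:ℝ) 1))
    simpa using this
  obtain ⟨ε, hεle, hεmem⟩ :=
    ((htend.eventually_le_const hh).and eventually_mem_nhdsWithin).exists
  obtain ⟨p, hs, hent, h1, h2, h3⟩ :=
    exists_pmf_aux m₁ m₂ m₃ ε hmom hεmem.1 hεmem.2
  exact ⟨p, hs, hent.trans hεle, h1, h2, h3⟩
end
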